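/- With Φ_{n,k} as above (n > 0), the inner product of f with Φ_{n,k} in L²(0,1) vanishes: ∫₀¹ f(u)·Φ_{n,k}(u) du = 0. -/

import Mathlib

open MeasureTheory intervalIntegral

/-- `h(t) = ∫₀ᵗ f(u)² du`. -/
noncomputable def hFun (f : ℝ → ℝ) (t : ℝ) : ℝ := ∫ u in (0:ℝ)..t, (f u) ^ 2

/-- Left endpoint `l_{n,k} = 2k·2⁻ⁿ` of the dyadic support `S_{n,k}`. -/
noncomputable def lPt (n k : ℕ) : ℝ := (2 * k : ℝ) / 2 ^ n

/-- Midpoint `m_{n,k} = (2k+1)·2⁻ⁿ`. -/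
noncomputable def mPt (n k : ℕ) : ℝ := (2 * k + 1 : ℝ) / 2 ^ n

/-- Right endpoint `r_{n,k} = 2(k+1)·2⁻ⁿ`. -/
noncomputable def rPt (n k : ℕ) : ℝ := (2 * k + 2 : ℝ) / 2 ^ n

/-- `L_{n,k} = √((h r − h m)/((h r − h l)(h m − h l)))`. -/
noncomputable def Lcoef (f : ℝ → ℝ) (n k : ℕ) : ℝ :=
  Real.sqrt ((hFun f (rPt n k) - hFun f (mPt n k)) /
    ((hFun f (rPt n k) - hFun f (lPt n k)) * (hFun f (mPt n k) - hFun f (lPt n k))))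

/-- `R_{n,k} = √((h m − h l)/((h r − h l)(h r − h m)))`. -/
noncomputable def Rcoef (f : ℝ → ℝ) (n k : ℕ) : ℝ :=
  Real.sqrt ((hFun f (mPt n k) - hFun f (lPt n k)) /
    ((hFun f (rPt n k) - hFun f (lPt n k)) * (hFun f (rPt n k) - hFun f (mPt n k))))

/-- The auxiliary Haar-like family `Φ_{n,k}`: `Φ_{0,0} = f/√(h 1 − h 0)` and, for
`n > 0`, `L_{n,k}·f` on `[l,m)`, `−R_{n,k}·f` on `[m,r)`, `0` elsewhere. -/
noncomputable def Phi (f : ℝ → ℝ) (n k : ℕ) (t : ℝ) : ℝ :=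
  if n = 0 then f t / Real.sqrt (hFun f 1 - hFun f 0)
  else if lPt n k ≤ t ∧ t < mPt n k then Lcoef f n k * f t
  else if mPt n k ≤ t ∧ t < rPt n k then -(Rcoef f n k * f t)
  else 0

/-!
On `[l, r)` the product `f · Φ_{n,k}` is `L f²` on `[l, m)` and `-R f²` on `[m, r)`, so the inner
product is `L (h m - h l) - R (h r - h m)`. With `a = h m - h l ≥ 0` and `b = h r - h m ≥ 0` both
terms equal `√(a b / (a + b))`: the coefficients are chosen exactly to balance the two halves.
-/

theorem Real.sqrt_div_mul_sub_eq {x y z : ℝ} (hxy : x ≤ y) (hyz : y ≤ z) :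
    √((z - y) / ((z - x) * (y - x))) * (y - x) =
      √((y - x) / ((z - x) * (z - y))) * (z - y) := by
  have sqrt_mul_eq : ∀ u {a : ℝ}, 0 ≤ a → √u * a = √(u * a ^ 2) := fun u a ha => by
    rw [Real.sqrt_mul' _ (sq_nonneg a), Real.sqrt_sq ha]
  rw [sqrt_mul_eq _ (sub_nonneg.2 hxy), sqrt_mul_eq _ (sub_nonneg.2 hyz)]
  congr 1
  rcases eq_or_ne (y - x) 0 with hxy' | hxy'
  · simp [hxy']
  rcases eq_or_ne (z - y) 0 with hyz' | hyz'
  · simp [hyz']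
  have hxz' : z - x ≠ 0 := fun h => hxy' (by linarith)
  field_simp

theorem IntervalIntegrable.indicator {s : Set ℝ} (hs : MeasurableSet s) {g : ℝ → ℝ} {a b : ℝ}
    (hg : IntervalIntegrable g volume a b) : IntervalIntegrable (s.indicator g) volume a b := by
  rw [intervalIntegrable_iff] at hg ⊢
  exact hg.indicator hs

theorem intervalIntegral.integral_indicator_Ico {g : ℝ → ℝ} {a b l m : ℝ}
    (hal : a ≤ l) (hlm : l ≤ m) (hmb : m ≤ b) :
    ∫ x in a..b, (Set.Ico l m).indicator g x = ∫ x in l..m, g x := by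
  rw [integral_of_le (hal.trans (hlm.trans hmb)), integral_of_le hlm,
    MeasureTheory.integral_congr_ae (ae_restrict_of_ae (indicator_ae_eq_of_ae_eq_set Ico_ae_eq_Ioc)),
    setIntegral_indicator measurableSet_Ioc, Set.inter_eq_right.2 (Set.Ioc_subset_Ioc hal hmb)]

section Dyadic

variable {n k : ℕ}

theorem lPt_nonneg : 0 ≤ lPt n k := by
  unfold lPt; positivity

theorem lPt_le_mPt : lPt n k ≤ mPt n k := by
  unfold lPt mPt; gcongr; linarith

theorem mPt_le_rPt : mPt n k ≤ rPt n k := by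
  unfold mPt rPt; gcongr; linarith

theorem rPt_le_one (hn : 1 ≤ n) (hk : k < 2 ^ (n - 1)) : rPt n k ≤ 1 := by
  rw [rPt, div_le_one (by positivity)]
  obtain ⟨n, rfl⟩ := Nat.exists_eq_add_of_le' hn
  have hk' : (k : ℝ) + 1 ≤ 2 ^ n := by exact_mod_cast hk
  rw [pow_succ]
  linarith

end Dyadic

theorem hFun_sub_hFun {f : ℝ → ℝ} (hf2 : IntervalIntegrable (fun u => f u ^ 2) volume 0 1)
    {x y : ℝ} (hx : x ∈ Set.Icc (0 : ℝ) 1) (hy : y ∈ Set.Icc (0 : ℝ) 1) :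
    hFun f y - hFun f x = ∫ u in x..y, f u ^ 2 := by
  have hsub : ∀ z ∈ Set.Icc (0 : ℝ) 1, IntervalIntegrable (fun u => f u ^ 2) volume 0 z :=
    fun z hz => hf2.mono_set (Set.uIcc_subset_uIcc Set.left_mem_uIcc (Set.mem_uIcc_of_le hz.1 hz.2))
  exact integral_interval_sub_left (hsub y hy) (hsub x hx)

theorem hFun_monotoneOn {f : ℝ → ℝ} (hf2 : IntervalIntegrable (fun u => f u ^ 2) volume 0 1) :
    MonotoneOn (hFun f) (Set.Icc 0 1) := fun _ hx _ hy hxy =>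
  sub_nonneg.1 <| (hFun_sub_hFun hf2 hx hy).symm ▸ integral_nonneg hxy fun _ _ => sq_nonneg _

theorem Lcoef_mul_eq_Rcoef_mul {f : ℝ → ℝ} {n k : ℕ}
    (hlm : hFun f (lPt n k) ≤ hFun f (mPt n k)) (hmr : hFun f (mPt n k) ≤ hFun f (rPt n k)) :
    Lcoef f n k * (hFun f (mPt n k) - hFun f (lPt n k)) =
      Rcoef f n k * (hFun f (rPt n k) - hFun f (mPt n k)) :=
  Real.sqrt_div_mul_sub_eq hlm hmr

theorem mul_Phi_eq {n : ℕ} (hn : n ≠ 0) (f : ℝ → ℝ) (k : ℕ) (t : ℝ) :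
    f t * Phi f n k t =
      Lcoef f n k * (Set.Ico (lPt n k) (mPt n k)).indicator (fun u => f u ^ 2) t -
        Rcoef f n k * (Set.Ico (mPt n k) (rPt n k)).indicator (fun u => f u ^ 2) t := by
  simp only [Phi, if_neg hn, Set.indicator_apply, Set.mem_Ico]
  split_ifs with hlm hmr
  · linarith [hlm.2, hmr.1]
  all_goals ring

theorem inner_f_Phi_eq_zero_general
    (f : ℝ → ℝ)
    (hf2 : IntervalIntegrable (fun u => (f u) ^ 2) MeasureTheory.volume 0 1) :
    ∀ n k : ℕ, 1 ≤ n → k < 2 ^ (n - 1) →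
      ∫ u in (0:ℝ)..1, f u * Phi f n k u = 0 := by
  intro n k hn hk
  have hr1 := rPt_le_one hn hk
  have hl : lPt n k ∈ Set.Icc (0 : ℝ) 1 := ⟨lPt_nonneg, lPt_le_mPt.trans (mPt_le_rPt.trans hr1)⟩
  have hm : mPt n k ∈ Set.Icc (0 : ℝ) 1 := ⟨lPt_nonneg.trans lPt_le_mPt, mPt_le_rPt.trans hr1⟩
  have hr : rPt n k ∈ Set.Icc (0 : ℝ) 1 := ⟨hm.1.trans mPt_le_rPt, hr1⟩
  simp_rw [mul_Phi_eq (by omega : n ≠ 0)]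
  rw [integral_sub ((hf2.indicator measurableSet_Ico).const_mul _)
      ((hf2.indicator measurableSet_Ico).const_mul _),
    intervalIntegral.integral_const_mul, intervalIntegral.integral_const_mul,
    integral_indicator_Ico lPt_nonneg lPt_le_mPt hm.2,
    integral_indicator_Ico hm.1 mPt_le_rPt hr1,
    ← hFun_sub_hFun hf2 hl hm, ← hFun_sub_hFun hf2 hm hr, sub_eq_zero]
  exact Lcoef_mul_eq_Rcoef_mul (hFun_monotoneOn hf2 hl hm lPt_le_mPt)
    (hFun_monotoneOn hf2 hm hr mPt_le_rPt)

/-- for `n ≥ 1`, the inner product of `f` with `Φ_{n,k}` in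
`L²(0,1)` vanishes: `∫₀¹ f·Φ_{n,k} = 0`. -/
theorem inner_f_Phi_eq_zero
    (f : ℝ → ℝ) (hfm : Measurable f)
    (hf2 : IntervalIntegrable (fun u => (f u) ^ 2) MeasureTheory.volume 0 1)
    (hmono : StrictMonoOn (hFun f) (Set.Icc 0 1)) :
    ∀ n k : ℕ, 1 ≤ n → k < 2 ^ (n - 1) →
      ∫ u in (0:ℝ)..1, f u * Phi f n k u = 0 :=
  inner_f_Phi_eq_zero_general f hf2
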